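/- arXiv:0801.0351 — 2 statements merged into one kernel-verified Lean document; each statement's English description precedes it below -/
import Mathlib

section
/- Let D be a set with two partial orders, a weak order <_wk and a strong order <_st such that <_st extends <_wk. Then the following are equivalent: (1) for every k there exists a chain for <_st with k elements that is an antichain for <_wk; (2) for every k there exists a finite chain X for <_st that is not the union of k chains for <_wk. -/
/-- A chain for a strict relation `r`: any two distinct elements are comparable. -/
def IsChainFor {D : Type*} (r : D → D → Prop) (X : Set D) : Prop :=
  ∀ x ∈ X, ∀ y ∈ X, x ≠ y → r x y ∨ r y x

/-- An antichain for a strict relation `r`: any two distinct elements are incomparable. -/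
def IsAntichainFor {D : Type*} (r : D → D → Prop) (X : Set D) : Prop :=
  ∀ x ∈ X, ∀ y ∈ X, x ≠ y → ¬ r x y ∧ ¬ r y x

/-!
An antichain for `wk` meets every `wk`-chain at most once, so a `wk`-antichain with `k + 1`
elements is not covered by `k` chains. Conversely, if a finite `st`-chain `X` is not covered by
`k` chains for `wk`, Dilworth's theorem yields a `wk`-antichain inside `X` with more than `k`
elements, and any `k` of them form an `st`-chain that is a `wk`-antichain.

For Dilworth's theorem we follow Galvin: remove a maximal element `m` of `s` and
partition the rest into `k` chains. If the rest contains an antichain of size `k`, the greatest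
elements of the chains lying on such antichains form an antichain, so one of them, `x`, lies
below `m`. Then `m` together with the elements of the chain of `x` below `x` is a chain which
meets every `k`-element antichain of the rest, and its complement has width less than `k`.
-/

open Finset

lemma IsChainFor.mono {D : Type*} {r : D → D → Prop} {X Y : Set D} (hX : IsChainFor r X)
    (hYX : Y ⊆ X) : IsChainFor r Y :=
  fun x hx y hy => hX x (hYX hx) y (hYX hy)

lemma IsAntichainFor.mono {D : Type*} {r : D → D → Prop} {X Y : Set D} (hX : IsAntichainFor r X)
    (hYX : Y ⊆ X) : IsAntichainFor r Y :=
  fun x hx y hy => hX x (hYX hx) y (hYX hy)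

lemma IsAntichainFor.card_le_of_subset_iUnion {D ι : Type*} [Fintype ι] {r : D → D → Prop}
    {X : Finset D} {C : ι → Set D} (hX : IsAntichainFor r ↑X) (hC : ∀ i, IsChainFor r (C i))
    (hXC : ↑X ⊆ ⋃ i, C i) : #X ≤ Fintype.card ι := by
  choose idx hidx using fun x : X => Set.mem_iUnion.1 (hXC x.2)
  have hinj : Function.Injective idx := by
    intro x y hxy
    by_contra hne
    have hne' : (x : D) ≠ y := fun h => hne (Subtype.ext h)
    rcases hC _ x (hidx x) y (hxy ▸ hidx y) hne' with h | h
    · exact (hX x x.2 y y.2 hne').1 h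
    · exact (hX x x.2 y y.2 hne').2 h
  simpa using Fintype.card_le_of_injective idx hinj

section PartialOrder
variable {α : Type*} [PartialOrder α]

lemma isChainFor_lt_iff {s : Set α} : IsChainFor (· < ·) s ↔ IsChain (· ≤ ·) s :=
  ⟨fun h _ hx _ hy hne => (h _ hx _ hy hne).imp le_of_lt le_of_lt,
    fun h _ hx _ hy hne => h.lt_of_le hx hy hne⟩

lemma isAntichainFor_lt_iff {s : Set α} : IsAntichainFor (· < ·) s ↔ IsAntichain (· ≤ ·) s :=
  ⟨fun h _ hx _ hy hne hle => (h _ hx _ hy hne).1 (hle.lt_of_ne hne),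
    fun h _ hx _ hy hne => ⟨fun hlt => h hx hy hne hlt.le, fun hlt => h hy hx hne.symm hlt.le⟩⟩

/-- The colour classes of `f` partition `s` into at most `k` chains. -/
structure IsChainColoring (s : Finset α) (k : ℕ) (f : α → ℕ) : Prop where
  lt : ∀ x ∈ s, f x < k
  le_or_le : ∀ x ∈ s, ∀ y ∈ s, f x = f y → x ≤ y ∨ y ≤ x

def InAntichainOfCard (s : Finset α) (k : ℕ) (x : α) : Prop :=
  ∃ t ⊆ s, IsAntichain (· ≤ ·) (t : Set α) ∧ #t = k ∧ x ∈ t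

lemma InAntichainOfCard.mem {s : Finset α} {k : ℕ} {x : α} (hx : InAntichainOfCard s k x) :
    x ∈ s :=
  let ⟨_, hts, _, _, hxt⟩ := hx
  hts hxt

lemma exists_le_of_maximal_of_antichain [DecidableEq α] {s : Finset α} {k : ℕ} {m : α}
    (hmax : Maximal (· ∈ s) m) (hs : ∀ t ⊆ s, IsAntichain (· ≤ ·) (t : Set α) → #t ≤ k)
    {x : Fin k → α} (hxs : ∀ i, x i ∈ s.erase m) (hx : ∀ i j, x i ≤ x j → i = j) :
    ∃ i, x i ≤ m := by
  by_contra! h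
  have hinj : Function.Injective x := fun i j hij => hx i j hij.le
  have hanti : IsAntichain (· ≤ ·) (↑(insert m (univ.image x)) : Set α) := by
    rw [coe_insert, coe_image, coe_univ, Set.image_univ]
    refine IsAntichain.insert ?_ ?_ ?_
    · rintro _ ⟨i, rfl⟩ _ ⟨j, rfl⟩ hne hle
      exact hne (congrArg x (hx i j hle))
    · rintro _ ⟨i, rfl⟩ -
      exact h i
    · rintro _ ⟨i, rfl⟩ - hle
      exact h i (hmax.2 (mem_of_mem_erase (hxs i)) hle)
  have hm : m ∉ univ.image x := by
    simpa using fun i => ne_of_mem_erase (hxs i)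
  have hcard := hs _
    (insert_subset hmax.1 (image_subset_iff.2 fun i _ => mem_of_mem_erase (hxs i))) hanti
  rw [card_insert_of_notMem hm, card_image_of_injective _ hinj, card_univ, Fintype.card_fin] at hcard
  omega

namespace IsChainColoring
variable [DecidableEq α] {s t K : Finset α} {k : ℕ} {f g : α → ℕ}

lemma injOn (hf : IsChainColoring s k f) (hts : t ⊆ s) (ht : IsAntichain (· ≤ ·) (t : Set α)) :
    Set.InjOn f t := by
  intro x hx y hy hxy
  by_contra hne
  rcases hf.le_or_le x (hts hx) y (hts hy) hxy with h | h
  · exact ht hx hy hne h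
  · exact ht hy hx (Ne.symm hne) h

lemma exists_mem_of_card_eq (hf : IsChainColoring s k f) (hts : t ⊆ s)
    (ht : IsAntichain (· ≤ ·) (t : Set α)) (hcard : #t = k) {i : ℕ} (hi : i < k) :
    ∃ y ∈ t, f y = i := by
  have himage : t.image f = range k :=
    eq_of_subset_of_card_le (image_subset_iff.2 fun x hx => mem_range.2 (hf.lt x (hts hx)))
      (by rw [card_range, card_image_of_injOn (hf.injOn hts ht), hcard])
  have hmem : i ∈ t.image f := himage ▸ mem_range.2 hi
  simpa using hmem

lemma ite_mem (hK : IsChain (· ≤ ·) (K : Set α)) (hg : IsChainColoring (s \ K) k g) :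
    IsChainColoring s (k + 1) (fun x => if x ∈ K then k else g x) where
  lt x hx := by
    by_cases hxK : x ∈ K
    · simp [hxK]
    · simpa [hxK] using (hg.lt x (mem_sdiff.2 ⟨hx, hxK⟩)).trans (Nat.lt_succ_self k)
  le_or_le x hx y hy hxy := by
    by_cases hxK : x ∈ K <;> by_cases hyK : y ∈ K <;> simp only [hxK, hyK, if_true, if_false] at hxy
    · exact hK.total hxK hyK
    · exact absurd hxy (hg.lt y (mem_sdiff.2 ⟨hy, hyK⟩)).ne'
    · exact absurd hxy (hg.lt x (mem_sdiff.2 ⟨hx, hxK⟩)).ne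
    · exact hg.le_or_le x (mem_sdiff.2 ⟨hx, hxK⟩) y (mem_sdiff.2 ⟨hy, hyK⟩) hxy

lemma exists_greatest_inAntichainOfCard (hf : IsChainColoring s k f)
    (hA : ∃ t ⊆ s, IsAntichain (· ≤ ·) (t : Set α) ∧ #t = k) {i : ℕ} (hi : i < k) :
    ∃ x, InAntichainOfCard s k x ∧ f x = i ∧
      ∀ y, InAntichainOfCard s k y → f y = i → y ≤ x := by
  classical
  obtain ⟨t, hts, ht, hcard⟩ := hA
  obtain ⟨y, hyt, hyi⟩ := hf.exists_mem_of_card_eq hts ht hcard hi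
  have hy : y ∈ s.filter fun y => InAntichainOfCard s k y ∧ f y = i :=
    mem_filter.2 ⟨hts hyt, ⟨t, hts, ht, hcard, hyt⟩, hyi⟩
  obtain ⟨x, hx⟩ := Finset.exists_maximal ⟨y, hy⟩
  obtain ⟨hxs, hxA, hxi⟩ := mem_filter.1 hx.1
  refine ⟨x, hxA, hxi, fun z hzA hzi => ?_⟩
  rcases hf.le_or_le z hzA.mem x hxs (hzi.trans hxi.symm) with h | h
  · exact h
  · exact hx.2 (mem_filter.2 ⟨hzA.mem, hzA, hzi⟩) h

lemma exists_antichain_of_greatest (hf : IsChainColoring s k f)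
    (hA : ∃ t ⊆ s, IsAntichain (· ≤ ·) (t : Set α) ∧ #t = k) :
    ∃ x : Fin k → α, (∀ i, InAntichainOfCard s k (x i) ∧ f (x i) = i ∧
      ∀ y, InAntichainOfCard s k y → f y = i → y ≤ x i) ∧
      ∀ i j, x i ≤ x j → i = j := by
  choose x hxA hxi hx using fun i : Fin k => hf.exists_greatest_inAntichainOfCard hA i.2
  refine ⟨x, fun i => ⟨hxA i, hxi i, hx i⟩, fun i j hij => ?_⟩
  obtain ⟨t, hts, ht, hcard, hjt⟩ := hxA j
  obtain ⟨y, hyt, hyi⟩ := hf.exists_mem_of_card_eq hts ht hcard i.2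
  have hyx : y = x j := by
    by_contra hne
    exact ht hyt hjt hne ((hx i y ⟨t, hts, ht, hcard, hyt⟩ hyi).trans hij)
  exact Fin.ext (by rw [← hyi, hyx, hxi j])

lemma exists_isChain_forall_card_lt {m : α} (hmax : Maximal (· ∈ s) m)
    (hs : ∀ t ⊆ s, IsAntichain (· ≤ ·) (t : Set α) → #t ≤ k)
    (hf : IsChainColoring (s.erase m) k f) :
    ∃ K ⊆ s, m ∈ K ∧ IsChain (· ≤ ·) (K : Set α) ∧
      ∀ t ⊆ s \ K, IsAntichain (· ≤ ·) (t : Set α) → #t < k := by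
  classical
  by_cases hA : ∃ t ⊆ s.erase m, IsAntichain (· ≤ ·) (t : Set α) ∧ #t = k
  · obtain ⟨x, hx, hxanti⟩ := hf.exists_antichain_of_greatest hA
    obtain ⟨i, hi⟩ := exists_le_of_maximal_of_antichain hmax hs (fun i => (hx i).1.mem) hxanti
    refine ⟨insert m ((s.erase m).filter fun y => f y = i ∧ y ≤ x i),
      insert_subset hmax.1 ((filter_subset _ _).trans (erase_subset _ _)), mem_insert_self _ _,
      ?_, fun t hts ht => (hs t (hts.trans sdiff_subset) ht).lt_of_ne fun hcard => ?_⟩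
    · rw [coe_insert]
      refine IsChain.insert (fun y hy z hz _ => ?_) fun y hy _ => Or.inr ?_
      · obtain ⟨hys, hyi, -⟩ := mem_filter.1 hy
        obtain ⟨hzs, hzi, -⟩ := mem_filter.1 hz
        exact hf.le_or_le y hys z hzs (hyi.trans hzi.symm)
      · exact (mem_filter.1 hy).2.2.trans hi
    · have htm : t ⊆ s.erase m := fun y hy => by
        obtain ⟨hys, hyK⟩ := mem_sdiff.1 (hts hy)
        exact mem_erase.2 ⟨fun h => hyK (h ▸ mem_insert_self _ _), hys⟩
      obtain ⟨y, hyt, hyi⟩ := hf.exists_mem_of_card_eq htm ht hcard i.2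
      refine (mem_sdiff.1 (hts hyt)).2 (mem_insert_of_mem (mem_filter.2 ⟨htm hyt, hyi, ?_⟩))
      exact (hx i).2.2 y ⟨t, htm, ht, hcard, hyt⟩ hyi
  · refine ⟨{m}, singleton_subset_iff.2 hmax.1, mem_singleton_self m, by simp,
      fun t hts ht => ?_⟩
    rw [sdiff_singleton_eq_erase] at hts
    exact (hs t (hts.trans (erase_subset _ _)) ht).lt_of_ne fun hcard => hA ⟨t, hts, ht, hcard⟩

end IsChainColoring

theorem exists_isChainColoring (s : Finset α) (k : ℕ)
    (hs : ∀ t ⊆ s, IsAntichain (· ≤ ·) (t : Set α) → #t ≤ k) :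
    ∃ f, IsChainColoring s k f := by
  classical
  induction s using Finset.strongInduction generalizing k with
  | H s ih =>
  rcases s.eq_empty_or_nonempty with rfl | hne
  · exact ⟨0, by simp, by simp⟩
  obtain ⟨m, hmax⟩ := Finset.exists_maximal hne
  obtain ⟨k, rfl⟩ : ∃ k', k = k' + 1 := by
    have := hs {m} (singleton_subset_iff.2 hmax.1) (by simp)
    rw [card_singleton] at this
    exact Nat.exists_eq_succ_of_ne_zero (by omega)
  obtain ⟨f, hf⟩ := ih _ (erase_ssubset hmax.1) (k + 1) fun t hts =>
    hs t (hts.trans (erase_subset _ _))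
  obtain ⟨K, hKs, hmK, hK, hKs'⟩ := hf.exists_isChain_forall_card_lt hmax hs
  obtain ⟨g, hg⟩ := ih _ (sdiff_ssubset hKs ⟨m, hmK⟩) k fun t hts ht =>
    Nat.lt_succ_iff.1 (hKs' t hts ht)
  exact ⟨_, hg.ite_mem hK⟩

theorem exists_isChain_cover_of_forall_antichain_card_le (s : Finset α) (k : ℕ)
    (hs : ∀ t ⊆ s, IsAntichain (· ≤ ·) (t : Set α) → #t ≤ k) :
    ∃ C : Fin k → Set α, (∀ i, IsChain (· ≤ ·) (C i)) ∧ ↑s ⊆ ⋃ i, C i := by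
  obtain ⟨f, hf⟩ := exists_isChainColoring s k hs
  refine ⟨fun i => {x | x ∈ s ∧ f x = i}, fun i x hx y hy _ => ?_, fun x hx => ?_⟩
  · exact hf.le_or_le x hx.1 y hy.1 (hx.2.trans hy.2.symm)
  · exact Set.mem_iUnion.2 ⟨⟨f x, hf.lt x hx⟩, hx, rfl⟩

end PartialOrder

theorem stmt0_general {D : Type*} (wk st : D → D → Prop)
    (hwk : IsStrictOrder D wk) :
    (∀ k : ℕ, ∃ X : Finset D, X.card = k ∧ IsChainFor st ↑X ∧ IsAntichainFor wk ↑X) ↔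
    (∀ k : ℕ, ∃ X : Finset D, IsChainFor st ↑X ∧
      ¬ ∃ C : Fin k → Set D, (∀ i, IsChainFor wk (C i)) ∧ (↑X : Set D) ⊆ ⋃ i, C i) := by
  refine ⟨fun h k => ?_, fun h k => ?_⟩
  · obtain ⟨X, hXcard, hXst, hXwk⟩ := h (k + 1)
    refine ⟨X, hXst, fun ⟨C, hC, hXC⟩ => ?_⟩
    have := hXwk.card_le_of_subset_iUnion hC hXC
    rw [Fintype.card_fin, hXcard] at this
    omega
  · obtain ⟨X, hXst, hXC⟩ := h k
    let _ : PartialOrder D := @partialOrderOfSO D wk hwk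
    obtain ⟨t, htX, htwk, hkt⟩ : ∃ t ⊆ X, IsAntichain (· ≤ ·) (t : Set D) ∧ k < #t := by
      by_contra! hX
      obtain ⟨C, hC, hXC'⟩ := exists_isChain_cover_of_forall_antichain_card_le X k hX
      exact hXC ⟨C, fun i => isChainFor_lt_iff.2 (hC i), hXC'⟩
    obtain ⟨u, hut, hucard⟩ := exists_subset_card_eq hkt.le
    exact ⟨u, hucard, hXst.mono (coe_subset.2 (hut.trans htX)),
      (isAntichainFor_lt_iff.2 htwk).mono (coe_subset.2 hut)⟩

theorem stmt0 {D : Type*} (wk st : D → D → Prop)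
    (hwk : IsStrictOrder D wk) (hst : IsStrictOrder D st)
    (hext : ∀ a b, wk a b → st a b) :
    (∀ k : ℕ, ∃ X : Finset D, X.card = k ∧ IsChainFor st ↑X ∧ IsAntichainFor wk ↑X) ↔
    (∀ k : ℕ, ∃ X : Finset D, IsChainFor st ↑X ∧
      ¬ ∃ C : Fin k → Set D, (∀ i, IsChainFor wk (C i)) ∧ (↑X : Set D) ⊆ ⋃ i, C i) :=
  stmt0_general wk st hwk
end

section
/- Let D = (D, <, ρ) be a computable partially ordered set (ρ : ℕ → D bijective with decidable order). If every chain in D has at most k elements, then for any partial computable f : {0,1}* × ℕ → D monotone increasing in its second argument (w.r.t. <), there exist k+1 partial computable functions f₀,…,f_k : {0,1}* → D such that for all p, {f(p,t) : t ∈ ℕ, f(p,t) defined} = {f_i(p) : i ≤ k, f_i(p) defined}. -/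
/-!
Dovetailing turns `f p ·` into a computable stage-wise approximation `F p n`. The distinct values
found by stage `n`, listed in order of discovery, form a list that only grows at its end, so its
`i`-th entry, once it exists, never changes; `g i p` waits for it. The entries are distinct and, by
monotonicity of `f p ·`, pairwise comparable under `ρ`, so the chain bound caps the length at `k`.
-/

open Nat.Partrec (Code)
open Encodable

section Approximation

variable {α σ : Type*} [Primcodable α] [Primcodable σ]

theorem Partrec.exists_computable_approx {f : α →. σ} (hf : Partrec f) :
    ∃ F : α → ℕ → Option σ, Computable₂ F ∧ ∀ a x, x ∈ f a ↔ ∃ n, F a n = some x := by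
  obtain ⟨c, hc⟩ := Code.exists_code.1 (Partrec.bind_decode₂_iff.1 hf)
  refine ⟨fun a n => (Code.evaln n c (encode a)).bind decode, ?_, fun a x => ?_⟩
  · exact Computable.option_bind
      (Code.primrec_evaln.to_comp.comp ((Computable.snd.pair (Computable.const c)).pair
        (Computable.encode.comp Computable.fst)))
      (Computable.decode.comp Computable.snd).to₂
  have hmem : ∀ y, y ∈ Code.eval c (encode a) ↔ ∃ x ∈ f a, encode x = y := by
    simp [hc]
  constructor
  · intro hx
    obtain ⟨n, hn⟩ := Code.evaln_complete.1 ((hmem _).2 ⟨x, hx, rfl⟩)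
    exact ⟨n, by simp [Option.mem_def.1 hn, encodek]⟩
  · rintro ⟨n, hn⟩
    obtain ⟨y, hy, hyx⟩ := Option.bind_eq_some_iff.1 hn
    obtain ⟨x', hx', rfl⟩ := (hmem y).1 (Code.evaln_sound hy)
    rw [encodek, Option.some_inj] at hyx
    exact hyx ▸ hx'

theorem Partrec₂.exists_computable_enum {f : α → ℕ →. σ} (hf : Partrec₂ f) :
    ∃ F : α → ℕ → Option σ, Computable₂ F ∧ ∀ a x, (∃ t, x ∈ f a t) ↔ ∃ n, F a n = some x := by
  obtain ⟨G, hG, hGf⟩ := Partrec.exists_computable_approx hf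
  refine ⟨fun a n => G (a, n.unpair.1) n.unpair.2, ?_, fun a x => ?_⟩
  · exact hG.comp
      (Computable.fst.pair (Computable.fst.comp (Computable.unpair.comp Computable.snd)))
      (Computable.snd.comp (Computable.unpair.comp Computable.snd))
  constructor
  · rintro ⟨t, ht⟩
    obtain ⟨s, hs⟩ := (hGf (a, t) x).1 ht
    exact ⟨Nat.pair t s, by simpa using hs⟩
  · rintro ⟨n, hn⟩
    exact ⟨_, (hGf _ x).2 ⟨_, hn⟩⟩

end Approximation

section Discoveries

variable {α β : Type*} [DecidableEq β]

def discoveries (F : α → ℕ → Option β) (a : α) : ℕ → List β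
  | 0 => []
  | n + 1 =>
    match F a n with
    | some b => if b ∈ discoveries F a n then discoveries F a n else discoveries F a n ++ [b]
    | none => discoveries F a n

variable {F : α → ℕ → Option β}

theorem discoveries_prefix_succ (a : α) (n : ℕ) :
    discoveries F a n <+: discoveries F a (n + 1) := by
  rw [discoveries]
  split
  · split_ifs
    · exact List.prefix_refl _
    · exact List.prefix_append _ _
  · exact List.prefix_refl _

theorem discoveries_prefix (a : α) {m n : ℕ} (h : m ≤ n) :
    discoveries F a m <+: discoveries F a n := by
  induction h with
  | refl => exact List.prefix_refl _
  | step _ ih => exact ih.trans (discoveries_prefix_succ a _)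

theorem mem_discoveries {a : α} {b : β} {n : ℕ} :
    b ∈ discoveries F a n ↔ ∃ m < n, F a m = some b := by
  induction n with
  | zero => simp [discoveries]
  | succ n ih =>
    simp only [Nat.lt_succ_iff_lt_or_eq, or_and_right, exists_or, exists_eq_left, ← ih]
    rw [discoveries]
    split
    · split_ifs <;> grind
    · grind

theorem nodup_discoveries (a : α) (n : ℕ) : (discoveries F a n).Nodup := by
  induction n with
  | zero => exact List.nodup_nil
  | succ n ih =>
    rw [discoveries]
    split
    · split_ifs with h
      · exact ih
      · exact ih.append (List.nodup_singleton _) (by simpa using h)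
    · exact ih

def nthDiscovery (F : α → ℕ → Option β) (a : α) (i : ℕ) : Part β :=
  Nat.rfindOpt fun n => (discoveries F a n)[i]?

theorem mem_nthDiscovery {a : α} {i : ℕ} {b : β} :
    b ∈ nthDiscovery F a i ↔ ∃ n, (discoveries F a n)[i]? = some b :=
  Nat.rfindOpt_mono fun hmn hb => by
    obtain ⟨hi, rfl⟩ := List.getElem?_eq_some_iff.1 hb
    exact List.prefix_iff_getElem?.1 (discoveries_prefix _ hmn) _ hi

theorem exists_mem_nthDiscovery_iff {a : α} {b : β} :
    (∃ i, b ∈ nthDiscovery F a i) ↔ ∃ n, F a n = some b := by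
  simp only [mem_nthDiscovery]
  constructor
  · rintro ⟨i, n, h⟩
    obtain ⟨m, -, hm⟩ := mem_discoveries.1 (List.mem_of_getElem? h)
    exact ⟨m, hm⟩
  · rintro ⟨n, h⟩
    have hb : b ∈ discoveries F a (n + 1) := mem_discoveries.2 ⟨n, n.lt_succ_self, h⟩
    obtain ⟨i, hi, hib⟩ := List.getElem_of_mem hb
    exact ⟨i, n + 1, by simp [hi, hib]⟩

theorem lt_of_mem_nthDiscovery {a : α} {i k : ℕ} {b : β}
    (hk : ∀ n, (discoveries F a n).length ≤ k) (h : b ∈ nthDiscovery F a i) : i < k := by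
  obtain ⟨n, hn⟩ := mem_nthDiscovery.1 h
  exact (List.getElem?_eq_some_iff.1 hn).1.trans_le (hk n)

variable [Primcodable α] [Primcodable β]

theorem computable_discoveries (hF : Computable₂ F) : Computable₂ (discoveries F) := by
  have hnew : Primrec₂ fun (l : List β) (b : β) => if b ∈ l then l else l ++ [b] :=
    Primrec.ite ((PrimrecRel.exists_mem_list Primrec.eq).comp Primrec.fst Primrec.snd |>.of_eq
      fun x => by simp) Primrec.fst Primrec.list_concat
  have hstep : Computable₂ fun (x : α × ℕ) (q : ℕ × List β) =>
      (F x.1 q.1).casesOn (motive := fun _ => List β) q.2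
        fun b => if b ∈ q.2 then q.2 else q.2 ++ [b] :=
    (Computable.option_casesOn
      (hF.comp (Computable.fst.comp Computable.fst) (Computable.fst.comp Computable.snd))
      (Computable.snd.comp Computable.snd)
      (hnew.to_comp.comp (Computable.snd.comp (Computable.snd.comp Computable.fst))
        Computable.snd).to₂).to₂
  show Computable fun x : α × ℕ => discoveries F x.1 x.2
  refine (Computable.nat_rec Computable.snd (Computable.const []) hstep).of_eq ?_
  rintro ⟨a, n⟩
  induction n with
  | zero => rfl
  | succ n ih =>
    simp only at ih ⊢
    rw [ih, discoveries]
    cases F a n <;> rfl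

theorem partrec_nthDiscovery (hF : Computable₂ F) : Partrec₂ (nthDiscovery F) :=
  Partrec.rfindOpt (Computable.list_getElem?.comp
    ((computable_discoveries hF).comp (Computable.fst.comp Computable.fst) Computable.snd)
    (Computable.snd.comp Computable.fst)).to₂

end Discoveries

theorem List.length_le_of_isChain {D : Type*} [LE D] {k : ℕ}
    (hchain : ∀ C : Finset D, _root_.IsChain (· ≤ ·) (↑C : Set D) → C.card ≤ k) {l : List D}
    (hl : l.Nodup) (hlc : _root_.IsChain (· ≤ ·) {x | x ∈ l}) : l.length ≤ k := by
  classical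
  simpa [List.toFinset_card_of_nodup hl] using hchain l.toFinset (by simpa using hlc)

theorem isChain_image_of_monotone {ι σ D : Type*} [LinearOrder ι] [LE D] (ρ : σ → D)
    (f : ι →. σ) (hmono : ∀ s t, s ≤ t → ∀ a ∈ f s, ∀ b ∈ f t, ρ a ≤ ρ b) :
    IsChain (· ≤ ·) (ρ '' {a | ∃ t, a ∈ f t}) := by
  rintro _ ⟨a, ⟨s, ha⟩, rfl⟩ _ ⟨b, ⟨t, hb⟩, rfl⟩ -
  rcases le_total s t with h | h
  · exact Or.inl (hmono s t h a ha b hb)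
  · exact Or.inr (hmono t s h b hb a ha)

theorem stmt16_general {D : Type*} [PartialOrder D] (ρ : ℕ → D) (hρ : Function.Bijective ρ)
    (k : ℕ) (hchain : ∀ C : Finset D, IsChain (· ≤ ·) (↑C : Set D) → C.card ≤ k)
    (f : ℕ → ℕ →. ℕ) (hf : Partrec₂ f)
    (hmono : ∀ p s t : ℕ, s ≤ t → ∀ a ∈ f p s, ∀ b ∈ f p t, ρ a ≤ ρ b) :
    ∃ g : Fin (k + 1) → ℕ →. ℕ, (∀ i, Partrec (g i)) ∧
      ∀ p : ℕ, {a : ℕ | ∃ t, a ∈ f p t} = {a : ℕ | ∃ i, a ∈ g i p} := by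
  obtain ⟨F, hF, hFf⟩ := hf.exists_computable_enum
  have hlen : ∀ p n, (discoveries F p n).length ≤ k := by
    intro p n
    rw [← List.length_map ρ]
    refine List.length_le_of_isChain hchain ((nodup_discoveries p n).map hρ.1)
      ((isChain_image_of_monotone ρ (f p) (hmono p)).mono ?_)
    intro _ hx
    obtain ⟨a, ha, rfl⟩ := List.mem_map.1 hx
    obtain ⟨m, -, hm⟩ := mem_discoveries.1 ha
    exact ⟨a, (hFf p a).2 ⟨m, hm⟩, rfl⟩
  refine ⟨fun i p => nthDiscovery F p i,
    fun i => (partrec_nthDiscovery hF).comp Computable.id (Computable.const _), fun p => ?_⟩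
  ext a
  simp only [Set.mem_ofPred_eq, hFf, ← exists_mem_nthDiscovery_iff]
  constructor
  · rintro ⟨i, hi⟩
    exact ⟨⟨i, (lt_of_mem_nthDiscovery (hlen p) hi).trans k.lt_succ_self⟩, hi⟩
  · rintro ⟨i, hi⟩
    exact ⟨i, hi⟩

theorem stmt16 {D : Type*} [PartialOrder D] (ρ : ℕ → D) (hρ : Function.Bijective ρ)
    (c : ℕ → ℕ → Bool) (hc : Computable₂ c)
    (hcspec : ∀ m n : ℕ, c m n = true ↔ ρ m < ρ n)
    (k : ℕ) (hchain : ∀ C : Finset D, IsChain (· ≤ ·) (↑C : Set D) → C.card ≤ k)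
    (f : ℕ → ℕ →. ℕ) (hf : Partrec₂ f)
    (hmono : ∀ p s t : ℕ, s ≤ t → ∀ a ∈ f p s, ∀ b ∈ f p t, ρ a ≤ ρ b) :
    ∃ g : Fin (k + 1) → ℕ →. ℕ, (∀ i, Partrec (g i)) ∧
      ∀ p : ℕ, {a : ℕ | ∃ t, a ∈ f p t} = {a : ℕ | ∃ i, a ∈ g i p} :=
  stmt16_general ρ hρ k hchain f hf hmono
end
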